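/- Let A be a commutative ring that is a ℂ[q]-algebra, free of finite rank as a ℂ[q]-module. Then A is reduced if and only if A/(q − a)A is reduced for all but finitely many a ∈ ℂ. In particular, if A/(q − a)A is reduced for infinitely many a ∈ ℂ then A is reduced. -/

import Mathlib

open Polynomial
open scoped TensorProduct

section Semilinear

variable {ι : Type*} [Fintype ι] [DecidableEq ι]
variable {R k A F : Type*} [CommRing R] [CommRing k] [CommRing A] [CommRing F]
  [Algebra R A] [Algebra k F]

theorem aux_leftMulMatrix (φ : R →+* k) (f : A →+* F)
    (hsmul : ∀ (c : R) (y : A), f (c • y) = φ c • f y)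
    (b : Module.Basis ι R A) (b' : Module.Basis ι k F) (hb : ∀ i, b' i = f (b i)) (x : A) (i j : ι) :
    Algebra.leftMulMatrix b' (f x) i j = φ (Algebra.leftMulMatrix b x i j) := by
  rw [Algebra.leftMulMatrix_eq_repr_mul, Algebra.leftMulMatrix_eq_repr_mul]
  have h1 : f x * b' j = ∑ i, φ (b.repr (x * b j) i) • b' i := by
    calc f x * b' j = f (x * b j) := by rw [hb, map_mul]
    _ = f (∑ i, b.repr (x * b j) i • b i) := by rw [b.sum_repr]
    _ = ∑ i, φ (b.repr (x * b j) i) • b' i := by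
        rw [map_sum]
        exact Finset.sum_congr rfl fun i _ => by rw [hsmul, hb]
  rw [h1]
  exact congrFun (b'.repr_sum_self _) i

theorem aux_trace (φ : R →+* k) (f : A →+* F)
    (hsmul : ∀ (c : R) (y : A), f (c • y) = φ c • f y)
    (b : Module.Basis ι R A) (b' : Module.Basis ι k F) (hb : ∀ i, b' i = f (b i)) (x : A) :
    Algebra.trace k F (f x) = φ (Algebra.trace R A x) := by
  rw [Algebra.trace_eq_matrix_trace b' (f x), Algebra.trace_eq_matrix_trace b x,
    Matrix.trace, Matrix.trace, map_sum]
  exact Finset.sum_congr rfl fun i _ => aux_leftMulMatrix φ f hsmul b b' hb x i i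

theorem aux_traceMatrix (φ : R →+* k) (f : A →+* F)
    (hsmul : ∀ (c : R) (y : A), f (c • y) = φ c • f y)
    (b : Module.Basis ι R A) (b' : Module.Basis ι k F) (hb : ∀ i, b' i = f (b i)) :
    Algebra.traceMatrix k b' = (Algebra.traceMatrix R b).map φ := by
  ext i j
  rw [Matrix.map_apply, Algebra.traceMatrix_apply, Algebra.traceMatrix_apply,
    Algebra.traceForm_apply, Algebra.traceForm_apply, hb, hb, ← map_mul,
    aux_trace φ f hsmul b b' hb]

end Semilinear

theorem aux_reduced_of_disc {ι : Type*} [Fintype ι] [DecidableEq ι]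
    {k F : Type*} [Field k] [CharZero k] [CommRing F] [Algebra k F]
    (b' : Module.Basis ι k F) (h : (Algebra.traceMatrix k b').det ≠ 0) : IsReduced F := by
  haveI : Module.Finite k F := Module.Finite.of_basis b'
  have hnd : (Algebra.traceForm k F).Nondegenerate := by
    have heq : Algebra.traceForm k F = Matrix.toBilin b' (Algebra.traceMatrix k b') := by
      have : LinearMap.BilinForm.toMatrix b' (Algebra.traceForm k F) = Algebra.traceMatrix k b' := by
        ext i j
        rw [Algebra.traceForm_toMatrix, Algebra.traceMatrix_apply, Algebra.traceForm_apply]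
      rw [← this, Matrix.toBilin_toMatrix]
    rw [heq]
    exact (Matrix.nondegenerate_of_det_ne_zero h).toBilin b'
  refine ⟨fun x hx => ?_⟩
  apply hnd.1 x
  intro y
  have hnil : IsNilpotent (Algebra.traceForm k F x y) := by
    rw [Algebra.traceForm_apply, Algebra.trace_apply]
    exact LinearMap.isNilpotent_trace_of_isNilpotent
      (((Commute.all x y).isNilpotent_mul_right hx).map (Algebra.lmul k F))
  exact hnil.eq_zero

theorem aux_idem_trace_zero {k F : Type*} [Field k] [CharZero k] [CommRing F] [Algebra k F]
    [Module.Finite k F] {e : F} (hee : e * e = e) (htre : Algebra.trace k F e = 0) :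
    e = 0 := by
  classical
  set p : Module.End k F := Algebra.lmul k F e with hp
  have hTapp : ∀ u, p u = e * u := fun u => rfl
  have hproj : LinearMap.IsProj (LinearMap.range p) p := by
    constructor
    · intro z; exact ⟨z, rfl⟩
    · rintro z ⟨u, rfl⟩
      rw [hTapp, hTapp, ← mul_assoc, hee]
  have htrp : LinearMap.trace k F p = (Module.finrank k (LinearMap.range p) : k) :=
    hproj.trace
  have hzero : (Module.finrank k (LinearMap.range p) : k) = 0 := by
    rw [← htrp, ← htre, Algebra.trace_apply]
  have hfr : Module.finrank k (LinearMap.range p) = 0 := by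
    exact_mod_cast hzero
  have hbot : LinearMap.range p = ⊥ := Submodule.finrank_eq_zero.mp hfr
  have hpz : p = 0 := LinearMap.range_eq_bot.mp hbot
  have := congrFun (congrArg DFunLike.coe hpz) 1
  rw [hTapp] at this
  simpa using this

set_option maxHeartbeats 2000000 in
set_option synthInstance.maxHeartbeats 1000000 in
theorem aux_disc_ne_zero {ι : Type*} [Fintype ι] [DecidableEq ι]
    {R : Type*} [CommRing R] [IsDomain R] [CharZero R]
    {A : Type*} [CommRing A] [Algebra R A]
    (b : Module.Basis ι R A) (hred : IsReduced A) :
    (Algebra.traceMatrix R b).det ≠ 0 := by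
  intro hd
  classical
  let K := FractionRing R
  haveI : CharZero K := charZero_of_injective_algebraMap (IsFractionRing.injective R K)
  let B := K ⊗[R] A
  let b' : Module.Basis ι K B := b.baseChange K
  haveI : Module.Finite K B := Module.Finite.of_basis b'
  haveI : FiniteDimensional K B := inferInstance
  haveI : NoZeroSMulDivisors K B := inferInstance
  let φ : R →+* K := algebraMap R K
  let f : A →+* B := (Algebra.TensorProduct.includeRight (R := R) (A := K) (B := A)).toRingHom
  have hsmul : ∀ (c : R) (y : A), f (c • y) = φ c • f y := by
    intro c y
    show (1 : K) ⊗ₜ[R] (c • y) = φ c • ((1:K) ⊗ₜ[R] y)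
    rw [TensorProduct.tmul_smul, algebraMap_smul]
  have hb : ∀ i, b' i = f (b i) := fun i => b.baseChange_apply K i
  have hrepr : ∀ (z : A) (i : ι), b'.repr (f z) i = φ (b.repr z i) := by
    intro z i
    have h1 : f z = ∑ j, φ (b.repr z j) • b' j := by
      conv_lhs => rw [← b.sum_repr z]
      rw [map_sum]
      exact Finset.sum_congr rfl fun j _ => by rw [hsmul, hb]
    rw [h1]
    exact congrFun (b'.repr_sum_self _) i
  have hfinj : Function.Injective f := by
    intro z w hzw
    have : ∀ i, φ (b.repr z i) = φ (b.repr w i) := fun i => by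
      rw [← hrepr, ← hrepr, hzw]
    have h2 : (b.repr z : ι →₀ R) = b.repr w := by
      ext i
      exact (IsFractionRing.injective R K) (this i)
    exact b.repr.injective h2
  -- the trace matrix over K is singular
  have hMdet : (Algebra.traceMatrix K b').det = 0 := by
    rw [aux_traceMatrix φ f hsmul b b' hb, ← RingHom.mapMatrix_apply, ← RingHom.map_det, hd, map_zero]
  obtain ⟨v, hv0, hv⟩ := Matrix.exists_mulVec_eq_zero_iff.mpr hMdet
  -- clear denominators
  obtain ⟨s, hs⟩ := IsLocalization.exist_integer_multiples_of_finite (nonZeroDivisors R) v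
  choose w hw using hs
  have hsne : φ (s : R) ≠ 0 := fun h =>
    (nonZeroDivisors.ne_zero s.2) ((IsFractionRing.injective R K) (by rwa [map_zero]))
  have hwv : ∀ i, φ (w i) = φ (s : R) * v i := by
    intro i
    rw [hw i, Algebra.smul_def]
  have hwne : w ≠ 0 := by
    intro h
    apply hv0
    ext i
    have := hwv i
    rw [h] at this
    simp only [Pi.zero_apply, map_zero] at this
    have := this.symm
    rcases mul_eq_zero.mp this with h' | h'
    · exact absurd h' hsne
    · exact h'
  set xt : A := ∑ i, w i • b i with hxt
  have hxtne : xt ≠ 0 := by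
    intro h
    apply hwne
    have := b.repr_sum_self w
    rw [← hxt, h, map_zero] at this
    ext i
    exact (congrFun this i).symm
  set X : B := f xt with hX
  have hXco : X = ∑ i, (φ (s : R) * v i) • b' i := by
    rw [hX, hxt, map_sum]
    exact Finset.sum_congr rfl fun i _ => by rw [hsmul, hb, hwv]
  -- trace of X * y vanishes
  have hMsymm : ∀ i j, Algebra.traceMatrix K b' i j = Algebra.traceMatrix K b' j i := by
    intro i j
    rw [Algebra.traceMatrix_apply, Algebra.traceMatrix_apply, Algebra.traceForm_apply,
      Algebra.traceForm_apply, mul_comm]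
  have htrb : ∀ j, Algebra.trace K B (X * b' j) = 0 := by
    intro j
    have hXj : X * b' j = ∑ i, (φ (s:R) * v i) • (b' i * b' j) := by
      rw [hXco, Finset.sum_mul]
      exact Finset.sum_congr rfl fun i _ => smul_mul_assoc _ _ _
    rw [hXj, map_sum]
    have hterm : ∀ i, Algebra.trace K B ((φ (s:R) * v i) • (b' i * b' j))
        = φ (s:R) * (Algebra.traceMatrix K b' j i * v i) := by
      intro i
      rw [map_smul, smul_eq_mul, Algebra.traceMatrix_apply, Algebra.traceForm_apply,
        mul_comm (b' j) (b' i)]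
      ring
    rw [Finset.sum_congr rfl fun i _ => hterm i, ← Finset.mul_sum]
    have h0 : ∑ i, Algebra.traceMatrix K b' j i * v i = 0 := by
      have := congrFun hv j
      simpa [Matrix.mulVec, dotProduct] using this
    rw [h0, mul_zero]
  have htr : ∀ y : B, Algebra.trace K B (X * y) = 0 := by
    intro y
    conv_lhs => rw [← b'.sum_repr y, Finset.mul_sum, map_sum]
    have : ∀ j, Algebra.trace K B (X * (b'.repr y j • b' j)) = 0 := by
      intro j
      rw [mul_smul_comm, map_smul, htrb, smul_zero]
    rw [Finset.sum_congr rfl fun j _ => this j, Finset.sum_const_zero]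
  -- descending chain of ranges of multiplication by powers of X
  let T : B →ₐ[K] Module.End K B := Algebra.lmul K B
  have hTapp : ∀ (z u : B), T z u = z * u := fun z u => rfl
  let g : ℕ →o (Submodule K B)ᵒᵈ :=
    ⟨fun n => OrderDual.toDual (LinearMap.range (T (X ^ n))), by
      intro n m hnm
      simp only [OrderDual.toDual_le_toDual]
      rintro z ⟨u, rfl⟩
      exact ⟨X ^ (m - n) * u, by rw [hTapp, hTapp, ← mul_assoc, ← pow_add,
        Nat.add_sub_cancel' hnm]⟩⟩
  obtain ⟨n, hn⟩ := IsArtinian.monotone_stabilizes g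
  set m := n + 1 with hm
  have hrange : LinearMap.range (T (X ^ m)) = LinearMap.range (T (X ^ (2 * m))) := by
    have h1 := hn m (Nat.le_succ n)
    have h2 := hn (2 * m) (by omega)
    have := h1.symm.trans h2
    exact congrArg OrderDual.ofDual this
  have hXm : X ^ m ∈ LinearMap.range (T (X ^ (2 * m))) := by
    rw [← hrange]
    exact ⟨1, by rw [hTapp, mul_one]⟩
  obtain ⟨c, hc⟩ := hXm
  rw [hTapp] at hc
  set e : B := X ^ m * c with he
  have hee : e * e = e := by
    have h2 : X ^ (2*m) = X ^ m * X ^ m := by rw [two_mul, pow_add]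
    calc e * e = (X ^ (2*m) * c) * c := by rw [he, h2]; ring
    _ = e := by rw [hc, he]
  have hXme : X ^ m * e = X ^ m := by
    rw [he, ← mul_assoc, ← pow_add, ← two_mul, hc]
  have hene : e ≠ 0 := by
    intro h
    rw [h, mul_zero] at hXme
    have : f (xt ^ m) = 0 := by rw [map_pow, ← hX, hXme]
    have hxm : xt ^ m = 0 := hfinj (by rw [this, map_zero])
    exact hxtne (hred.eq_zero xt ⟨m, hxm⟩)
  have htre : Algebra.trace K B e = 0 := by
    have : e = X * (X ^ n * c) := by rw [he, hm, pow_succ', mul_assoc]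
    rw [this, htr]
  exact hene (aux_idem_trace_zero hee htre)

set_option maxHeartbeats 1000000 in
set_option synthInstance.maxHeartbeats 400000 in
theorem aux_fiber {ι : Type*} [Fintype ι] [DecidableEq ι]
    {A : Type*} [CommRing A] [Algebra (Polynomial ℂ) A]
    (b : Module.Basis ι (Polynomial ℂ) A) (a : ℂ)
    (h : ((Algebra.traceMatrix (Polynomial ℂ) b).det).eval a ≠ 0) :
    IsReduced (A ⧸ Ideal.span {algebraMap (Polynomial ℂ) A (X - C a)}) := by
  classical
  set r : Polynomial ℂ := X - C a with hr
  set I : Ideal A := Ideal.span {algebraMap (Polynomial ℂ) A r} with hI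
  set π : A →+* A ⧸ I := Ideal.Quotient.mk I with hπ
  set φ : Polynomial ℂ →+* ℂ := evalRingHom a with hφ
  letI : Algebra ℂ (A ⧸ I) :=
    ((π.comp (algebraMap (Polynomial ℂ) A)).comp (C : ℂ →+* Polynomial ℂ)).toAlgebra
  have halgmap : algebraMap ℂ (A ⧸ I) =
      (π.comp (algebraMap (Polynomial ℂ) A)).comp (C : ℂ →+* Polynomial ℂ) := rfl
  have halg : ∀ c : Polynomial ℂ, π (algebraMap (Polynomial ℂ) A c)
      = algebraMap ℂ (A ⧸ I) (φ c) := by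
    intro c
    have hd : r ∣ (c - Polynomial.C (φ c)) := by
      rw [hr, hφ]; exact Polynomial.X_sub_C_dvd_sub_C_eval
    obtain ⟨g, hg⟩ := hd
    have hmem : algebraMap (Polynomial ℂ) A c - algebraMap (Polynomial ℂ) A (Polynomial.C (φ c))
        ∈ I := by
      rw [← map_sub, hg, map_mul, hI]
      exact Ideal.mul_mem_right _ _ (Ideal.subset_span rfl)
    have h0 : π (algebraMap (Polynomial ℂ) A c)
        - π (algebraMap (Polynomial ℂ) A (Polynomial.C (φ c))) = 0 := by
      rw [← map_sub]
      exact Ideal.Quotient.eq_zero_iff_mem.mpr hmem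
    have h1 := sub_eq_zero.mp h0
    rw [h1, halgmap]
    rfl
  have hsmul : ∀ (c : Polynomial ℂ) (y : A), π (c • y) = φ c • π y := by
    intro c y
    rw [Algebra.smul_def, map_mul, halg, Algebra.smul_def]
  have hli : LinearIndependent ℂ (fun i => π (b i)) := by
    rw [Fintype.linearIndependent_iff]
    intro g hg
    have hy : π (∑ i, Polynomial.C (g i) • b i) = 0 := by
      rw [map_sum, ← hg]
      refine Finset.sum_congr rfl fun i _ => ?_
      rw [hsmul]
      congr 1
      simp [hφ]
    have hmem : (∑ i, Polynomial.C (g i) • b i) ∈ I := Ideal.Quotient.eq_zero_iff_mem.mp hy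
    rw [hI, Ideal.mem_span_singleton] at hmem
    obtain ⟨u, hu⟩ := hmem
    have hu' : (∑ i, Polynomial.C (g i) • b i) = r • u := by rw [hu, Algebra.smul_def]
    intro i
    have h2 := congrFun (b.repr_sum_self fun j => Polynomial.C (g j)) i
    rw [hu'] at h2
    have h1 : Polynomial.C (g i) = r * b.repr u i := by
      rw [← h2, map_smul, Finsupp.smul_apply, smul_eq_mul]
    have h3 := congrArg (Polynomial.eval a) h1
    simpa [hr] using h3
  have hsp : ⊤ ≤ Submodule.span ℂ (Set.range fun i => π (b i)) := by
    rintro z -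
    obtain ⟨y, rfl⟩ := Ideal.Quotient.mk_surjective (I := I) z
    have hy : Ideal.Quotient.mk I y = ∑ i, φ (b.repr y i) • π (b i) := by
      show π y = _
      conv_lhs => rw [← b.sum_repr y]
      rw [map_sum]
      exact Finset.sum_congr rfl fun i _ => by rw [hsmul]
    rw [hy]
    exact Submodule.sum_mem _ fun i _ =>
      Submodule.smul_mem _ _ (Submodule.subset_span ⟨i, rfl⟩)
  let b' : Module.Basis ι ℂ (A ⧸ I) := Module.Basis.mk hli hsp
  have hb : ∀ i, b' i = π (b i) := fun i => Module.Basis.mk_apply hli hsp i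
  refine aux_reduced_of_disc b' ?_
  rw [aux_traceMatrix φ π hsmul b b' hb, ← RingHom.mapMatrix_apply, ← RingHom.map_det]
  simpa [hφ] using h

/-- Let `A` be a commutative `ℂ[q]`-algebra, free of finite rank as a `ℂ[q]`-module.
Then `A` is reduced iff the fiber `A/(q − a)A` is reduced for all but finitely many
`a ∈ ℂ`; and if the fiber is reduced for infinitely many `a ∈ ℂ` then `A` is
reduced. -/
theorem reduced_iff_generic_fibers_reduced (A : Type*) [CommRing A]
    [Algebra (Polynomial ℂ) A] [Module.Free (Polynomial ℂ) A]
    [Module.Finite (Polynomial ℂ) A] :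
    (IsReduced A ↔ ∃ S : Finset ℂ, ∀ a : ℂ, a ∉ S →
        IsReduced (A ⧸ Ideal.span
          {algebraMap (Polynomial ℂ) A (Polynomial.X - Polynomial.C a)})) ∧
    ({a : ℂ | IsReduced (A ⧸ Ideal.span
          {algebraMap (Polynomial ℂ) A (Polynomial.X - Polynomial.C a)})}.Infinite
      → IsReduced A) := by
  classical
  let b : Module.Basis (Module.Free.ChooseBasisIndex (Polynomial ℂ) A) (Polynomial ℂ) A :=
    Module.Free.chooseBasis (Polynomial ℂ) A
  have part2 : {a : ℂ | IsReduced (A ⧸ Ideal.span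
      {algebraMap (Polynomial ℂ) A (Polynomial.X - Polynomial.C a)})}.Infinite
      → IsReduced A := by
    intro hinf
    refine ⟨fun x hx => ?_⟩
    have key : ∀ i, (b.repr x) i = 0 := by
      intro i
      apply Polynomial.eq_zero_of_infinite_isRoot
      apply Set.Infinite.mono ?_ hinf
      intro a ha
      haveI : IsReduced (A ⧸ Ideal.span
        {algebraMap (Polynomial ℂ) A (Polynomial.X - Polynomial.C a)}) := ha
      have h1 : (Ideal.Quotient.mk (Ideal.span
          {algebraMap (Polynomial ℂ) A (Polynomial.X - Polynomial.C a)})) x = 0 :=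
        IsReduced.eq_zero _ (hx.map _)
      have hmem := Ideal.Quotient.eq_zero_iff_mem.mp h1
      rw [Ideal.mem_span_singleton] at hmem
      obtain ⟨u, hu⟩ := hmem
      have h2 : b.repr x i = (Polynomial.X - Polynomial.C a) * b.repr u i := by
        have : x = (Polynomial.X - Polynomial.C a) • u := by rw [hu, Algebra.smul_def]
        rw [this, map_smul, Finsupp.smul_apply, smul_eq_mul]
      show Polynomial.IsRoot _ a
      rw [Polynomial.IsRoot, h2]
      simp
    have hz : b.repr x = 0 := Finsupp.ext key
    have := b.repr.map_eq_zero_iff.mp hz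
    exact this
  refine ⟨⟨fun hred => ?_, fun ⟨S, hS⟩ => ?_⟩, part2⟩
  · have hd := aux_disc_ne_zero b hred
    refine ⟨(Algebra.traceMatrix (Polynomial ℂ) b).det.roots.toFinset, fun a ha => ?_⟩
    refine aux_fiber b a fun h0 => ha ?_
    rw [Multiset.mem_toFinset, Polynomial.mem_roots']
    exact ⟨hd, h0⟩
  · refine part2 (Set.Infinite.mono ?_ (S.finite_toSet.infinite_compl))
    intro a ha
    exact hS a ha
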